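/- arXiv:1902.02129 — 2 statements merged into one kernel-verified Lean document; each statement's English description precedes it below -/
import Mathlib

section
/- Let (Ω, 𝓐, ℙ) be a probability space, κ ∈ (1/2, 1], L ∈ ℕ, and h_0 > h_1 > ⋯ > h_L > 0 real numbers with h_{ℓ−1} ≤ C₁ h_ℓ for all ℓ ∈ {1, …, L} and some C₁ > 0. Let Ψ, Ψ_0, …, Ψ_L be real random variables in L²(Ω; ℝ) satisfying ‖Ψ − Ψ_ℓ‖_{L²(Ω;ℝ)} ≤ C₂ h_ℓ^{2κ} for all ℓ ∈ {0, …, L} and some C₂ > 0, with the convention Ψ_{−1} := 0. Let ρ_1, …, ρ_L ∈ (0, 1) be weights with ∑_{ℓ=1}^{L} ρ_ℓ ≤ C_ρ for some C_ρ > 0. Let M_0, …, M_L ≥ 1 be integers with M_0 ≥ h_L^{−4κ} and M_ℓ ≥ (h_ℓ / h_L)^{4κ} ρ_ℓ^{−2} for ℓ ∈ {1, …, L}. For each ℓ, let D_ℓ^{(1)}, …, D_ℓ^{(M_ℓ)} be independent and identically distributed copies of Ψ_ℓ − Ψ_{ℓ−1}; no independence across different levels is assumed. Then the multilevel Monte Carlo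 estimator E^L(Ψ_L) := ∑_{ℓ=0}^{L} (1/M_ℓ) ∑_{i=1}^{M_ℓ} D_ℓ^{(i)} satisfies ‖E(Ψ) − E^L(Ψ_L)‖_{L²(Ω;ℝ)} ≤ ( C₂ + ‖Ψ_0‖_{L²(Ω;ℝ)} + C₂ (1 + max(C₁, C₁²)) C_ρ ) · h_L^{2κ}. -/
/-!
The error of the multilevel estimator splits into the bias `E(Ψ - Ψ_L)` plus, for each level,
the statistical error of the sample mean of the correction `Ψ_ℓ - Ψ_{ℓ-1}`. Minkowski's inequality
bounds its `L²` norm by `‖Ψ - Ψ_L‖ + ∑_ℓ ‖Ψ_ℓ - Ψ_{ℓ-1}‖ / √M_ℓ`, so no independence across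
levels is needed; within a level, the variance of a mean of `M_ℓ` i.i.d. copies is the variance
of one copy divided by `M_ℓ`. The approximation property and `h_{ℓ-1} ≤ C₁ h_ℓ` give
`‖Ψ_ℓ - Ψ_{ℓ-1}‖ ≤ C₂ (1 + C₁^{2κ}) h_ℓ^{2κ}`, and the choice of `M_ℓ` cancels `h_ℓ^{2κ}` against
`h_L^{2κ}` at the price of the summable weight `ρ_ℓ`.
-/

open MeasureTheory ProbabilityTheory

lemma Finset.sum_range_succ_eq_add_sum_Icc {M : Type*} [AddCommMonoid M] (f : ℕ → M) (n : ℕ) :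
    ∑ k ∈ Finset.range (n + 1), f k = f 0 + ∑ k ∈ Finset.Icc 1 n, f k := by
  rw [Finset.range_eq_Ico, Finset.sum_eq_sum_Ico_succ_bot n.succ_pos, zero_add,
    Nat.succ_eq_add_one, Finset.Ico_add_one_right_eq_Icc]

lemma Real.rpow_le_max_self_sq {c t : ℝ} (hc : 0 ≤ c) (ht1 : 1 ≤ t) (ht2 : t ≤ 2) :
    c ^ t ≤ max c (c ^ 2) := by
  rcases le_total 1 c with hc1 | hc1
  · calc c ^ t ≤ c ^ (2 : ℝ) := Real.rpow_le_rpow_of_exponent_le hc1 ht2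
      _ ≤ _ := by rw [Real.rpow_two]; exact le_max_right _ _
  · calc c ^ t ≤ c ^ (1 : ℝ) := Real.rpow_le_rpow_of_exponent_ge' hc hc1 zero_le_one ht1
      _ ≤ _ := by rw [Real.rpow_one]; exact le_max_left _ _

lemma Real.rpow_le_max_mul_rpow {a b c t : ℝ} (ha : 0 ≤ a) (hb : 0 ≤ b) (hc : 0 ≤ c)
    (hab : a ≤ c * b) (ht1 : 1 ≤ t) (ht2 : t ≤ 2) : a ^ t ≤ max c (c ^ 2) * b ^ t :=
  calc a ^ t ≤ (c * b) ^ t := Real.rpow_le_rpow ha hab (by linarith)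
    _ = c ^ t * b ^ t := Real.mul_rpow hc hb
    _ ≤ max c (c ^ 2) * b ^ t := by gcongr; exact Real.rpow_le_max_self_sq hc ht1 ht2

lemma Real.inv_sqrt_le_rpow_mul {x ρ m s : ℝ} (hx : 0 < x) (hρ : 0 < ρ)
    (hm : x⁻¹ ^ (2 * s) * ρ⁻¹ ^ 2 ≤ m) : (√m)⁻¹ ≤ x ^ s * ρ := by
  have hsq : (x ^ s * ρ)⁻¹ ^ 2 = x⁻¹ ^ (2 * s) * ρ⁻¹ ^ 2 := by
    rw [mul_inv, mul_pow, ← Real.inv_rpow hx.le, mul_comm 2 s,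
      Real.rpow_mul (inv_nonneg.2 hx.le), Real.rpow_two]
  refine inv_le_of_inv_le₀ (by positivity) ?_
  rw [← Real.sqrt_sq (inv_nonneg.2 (by positivity : 0 ≤ x ^ s * ρ))]
  exact Real.sqrt_le_sqrt (hsq ▸ hm)

lemma Real.div_sqrt_le_mul_rpow_mul {y m a b ρ K s : ℝ} (ha : 0 < a) (hb : 0 < b) (hρ : 0 < ρ)
    (hK : 0 ≤ K) (hm : (b / a) ^ (2 * s) * ρ⁻¹ ^ 2 ≤ m) (hy : y ≤ K * b ^ s) :
    y / √m ≤ K * a ^ s * ρ :=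
  calc y / √m = (√m)⁻¹ * y := div_eq_inv_mul _ _
    _ ≤ (√m)⁻¹ * (K * b ^ s) := by gcongr
    _ ≤ (a / b) ^ s * ρ * (K * b ^ s) := by
      gcongr
      exact Real.inv_sqrt_le_rpow_mul (by positivity) hρ (by rwa [inv_div])
    _ = K * a ^ s * ρ := by
      rw [Real.div_rpow ha.le hb.le]
      field_simp

lemma Real.div_sqrt_le_mul_rpow {y m a s : ℝ} (ha : 0 < a) (hy : 0 ≤ y) (hm : a ^ (-(2 * s)) ≤ m) :
    y / √m ≤ y * a ^ s := by
  have hm' : (1 / a) ^ (2 * s) * 1⁻¹ ^ 2 ≤ m := by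
    rwa [one_div, Real.inv_rpow ha.le, ← Real.rpow_neg ha.le, inv_one, one_pow, mul_one]
  simpa using Real.div_sqrt_le_mul_rpow_mul ha one_pos one_pos hy hm' (by simp)

namespace MLMC

section

variable {Ω : Type*}

noncomputable def sampleMean (D : ℕ → Ω → ℝ) (M : ℕ) (ω : Ω) : ℝ :=
  (M : ℝ)⁻¹ * ∑ i ∈ Finset.range M, D i ω

-- the paper's `Ψ_ℓ - Ψ_{ℓ-1}` with the convention `Ψ_{-1} = 0`
def levelCorrection (X : ℕ → Ω → ℝ) (ℓ : ℕ) (ω : Ω) : ℝ :=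
  X ℓ ω - if ℓ = 0 then 0 else X (ℓ - 1) ω

lemma sum_levelCorrection (X : ℕ → Ω → ℝ) (L : ℕ) (ω : Ω) :
    ∑ ℓ ∈ Finset.range (L + 1), levelCorrection X ℓ ω = X L ω := by
  induction L with
  | zero => simp [levelCorrection]
  | succ L ih => rw [Finset.sum_range_succ, ih]; simp [levelCorrection]

lemma levelCorrection_zero (X : ℕ → Ω → ℝ) : levelCorrection X 0 = X 0 := by
  ext ω; simp [levelCorrection]

lemma levelCorrection_of_ne_zero (X : ℕ → Ω → ℝ) {ℓ : ℕ} (hℓ : ℓ ≠ 0) :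
    levelCorrection X ℓ = fun ω => X ℓ ω - X (ℓ - 1) ω := by
  ext ω; simp [levelCorrection, hℓ]

end

variable {Ω : Type*} [MeasurableSpace Ω] {P : Measure Ω}

noncomputable def l2Norm (P : Measure Ω) (f : Ω → ℝ) : ℝ := √(∫ ω, f ω ^ 2 ∂P)

lemma l2Norm_nonneg (f : Ω → ℝ) : 0 ≤ l2Norm P f := Real.sqrt_nonneg _

lemma l2Norm_eq_toReal_eLpNorm {f : Ω → ℝ} (hf : MemLp f 2 P) :
    l2Norm P f = (eLpNorm f 2 P).toReal := by
  rw [hf.eLpNorm_eq_integral_rpow_norm two_ne_zero ENNReal.ofNat_ne_top,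
    ENNReal.toReal_ofReal (by positivity), l2Norm, Real.sqrt_eq_rpow]
  norm_num [Real.rpow_two, Real.norm_eq_abs, sq_abs]

lemma l2Norm_add_le {f g : Ω → ℝ} (hf : MemLp f 2 P) (hg : MemLp g 2 P) :
    l2Norm P (fun ω => f ω + g ω) ≤ l2Norm P f + l2Norm P g := by
  rw [l2Norm_eq_toReal_eLpNorm hf, l2Norm_eq_toReal_eLpNorm hg,
    l2Norm_eq_toReal_eLpNorm (f := fun ω => f ω + g ω) (hf.add hg),
    ← ENNReal.toReal_add hf.2.ne hg.2.ne]
  exact ENNReal.toReal_mono (ENNReal.add_ne_top.2 ⟨hf.2.ne, hg.2.ne⟩)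
    (eLpNorm_add_le hf.1 hg.1 one_le_two)

lemma l2Norm_sum_le {ι : Type*} (s : Finset ι) {f : ι → Ω → ℝ}
    (hf : ∀ i ∈ s, MemLp (f i) 2 P) :
    l2Norm P (fun ω => ∑ i ∈ s, f i ω) ≤ ∑ i ∈ s, l2Norm P (f i) := by
  classical
  induction s using Finset.induction_on with
  | empty => simp [l2Norm]
  | insert a s ha ih =>
    rw [Finset.forall_mem_insert] at hf
    simp only [Finset.sum_insert ha]
    exact (l2Norm_add_le hf.1 (memLp_finsetSum s hf.2)).trans (by gcongr; exact ih hf.2)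

lemma l2Norm_sub_comm (f g : Ω → ℝ) :
    l2Norm P (fun ω => f ω - g ω) = l2Norm P (fun ω => g ω - f ω) := by
  simp only [l2Norm, sub_sq_comm (f _)]

lemma l2Norm_sub_le {Ψ f g : Ω → ℝ} (hΨ : MemLp Ψ 2 P) (hf : MemLp f 2 P) (hg : MemLp g 2 P) :
    l2Norm P (fun ω => f ω - g ω) ≤
      l2Norm P (fun ω => Ψ ω - f ω) + l2Norm P (fun ω => Ψ ω - g ω) := by
  have htri := l2Norm_add_le (f := fun ω => f ω - Ψ ω) (g := fun ω => Ψ ω - g ω)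
    (hf.sub hΨ) (hΨ.sub hg)
  simp only [sub_add_sub_cancel] at htri
  rwa [l2Norm_sub_comm f Ψ] at htri

lemma memLp_levelCorrection {X : ℕ → Ω → ℝ} {ℓ : ℕ} (hX : ∀ k ≤ ℓ, MemLp (X k) 2 P) :
    MemLp (levelCorrection X ℓ) 2 P := by
  unfold levelCorrection
  split_ifs
  · simpa using hX ℓ le_rfl
  · exact (hX ℓ le_rfl).sub (hX (ℓ - 1) (Nat.sub_le ℓ 1))

lemma l2Norm_levelCorrection_le {Ψ : Ω → ℝ} {X : ℕ → Ω → ℝ} {h : ℕ → ℝ} {C₁ C₂ t : ℝ}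
    {ℓ : ℕ} (hℓ : ℓ ≠ 0) (hΨ : MemLp Ψ 2 P) (hX : ∀ k ≤ ℓ, MemLp (X k) 2 P)
    (happrox : ∀ k ≤ ℓ, l2Norm P (fun ω => Ψ ω - X k ω) ≤ C₂ * h k ^ t)
    (hh : ∀ k ≤ ℓ, 0 ≤ h k) (hmesh : h (ℓ - 1) ≤ C₁ * h ℓ) (hC₁ : 0 ≤ C₁) (hC₂ : 0 ≤ C₂)
    (ht1 : 1 ≤ t) (ht2 : t ≤ 2) :
    l2Norm P (levelCorrection X ℓ) ≤ C₂ * (1 + max C₁ (C₁ ^ 2)) * h ℓ ^ t := by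
  have hprev : ℓ - 1 ≤ ℓ := Nat.sub_le ℓ 1
  have hratio := Real.rpow_le_max_mul_rpow (hh _ hprev) (hh ℓ le_rfl) hC₁ hmesh ht1 ht2
  rw [levelCorrection_of_ne_zero X hℓ]
  calc _ ≤ l2Norm P (fun ω => Ψ ω - X ℓ ω) + l2Norm P (fun ω => Ψ ω - X (ℓ - 1) ω) :=
        l2Norm_sub_le hΨ (hX ℓ le_rfl) (hX _ hprev)
    _ ≤ C₂ * h ℓ ^ t + C₂ * (max C₁ (C₁ ^ 2) * h ℓ ^ t) := by
        gcongr
        exacts [happrox ℓ le_rfl, (happrox _ hprev).trans (mul_le_mul_of_nonneg_left hratio hC₂)]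
    _ = _ := by ring

variable [IsProbabilityMeasure P]

lemma l2Norm_const (c : ℝ) : l2Norm P (fun _ => c) = |c| := by
  simp [l2Norm, Real.sqrt_sq_eq_abs]

lemma abs_integral_le_l2Norm {f : Ω → ℝ} (hf : MemLp f 2 P) :
    |∫ ω, f ω ∂P| ≤ l2Norm P f := by
  have hvar := variance_nonneg f P
  rw [variance_eq_sub hf] at hvar
  rw [← Real.sqrt_sq_eq_abs]
  exact Real.sqrt_le_sqrt (by simpa using hvar)

lemma integral_sq_integral_sub_sampleMean {Y : Ω → ℝ} (hY : MemLp Y 2 P)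
    {M : ℕ} (hM : 1 ≤ M) {D : ℕ → Ω → ℝ}
    (hindep : iIndepFun (fun i : Fin M => D i) P) (hident : ∀ i < M, IdentDistrib (D i) Y P P) :
    ∫ ω, (∫ ω', Y ω' ∂P - sampleMean D M ω) ^ 2 ∂P = variance Y P / M := by
  have hD : ∀ i ∈ Finset.range M, MemLp (D i) 2 P := fun i hi =>
    (hident i (Finset.mem_range.mp hi)).symm.memLp_snd hY
  have hmean : MemLp (sampleMean D M) 2 P := (memLp_finsetSum _ hD).const_mul _
  have hE : ∫ ω, sampleMean D M ω ∂P = ∫ ω, Y ω ∂P := by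
    simp only [sampleMean, integral_const_mul,
      integral_finsetSum _ fun i hi => (hD i hi).integrable one_le_two]
    rw [Finset.sum_congr rfl fun i hi => (hident i (Finset.mem_range.mp hi)).integral_eq]
    simp [field]
  have hpair : (Finset.range M : Set ℕ).Pairwise fun i j => IndepFun (D i) (D j) P :=
    fun i hi j hj hij => hindep.indepFun (i := ⟨i, by simpa using hi⟩) (j := ⟨j, by simpa using hj⟩)
      (by simpa [Fin.ext_iff] using hij)
  have hvar : variance (sampleMean D M) P = variance Y P / M := by
    rw [show sampleMean D M = fun ω => (M : ℝ)⁻¹ * (∑ i ∈ Finset.range M, D i) ω by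
        ext ω; simp [sampleMean], variance_const_mul, IndepFun.variance_sum hD hpair,
      Finset.sum_congr rfl fun i hi => (hident i (Finset.mem_range.mp hi)).variance_eq]
    simp [field]
  rw [← hvar, variance_eq_integral hmean.aemeasurable, hE]
  simp only [sub_sq_comm]

lemma l2Norm_integral_sub_sampleMean_le {Y : Ω → ℝ} (hY : MemLp Y 2 P)
    {M : ℕ} (hM : 1 ≤ M) {D : ℕ → Ω → ℝ}
    (hindep : iIndepFun (fun i : Fin M => D i) P) (hident : ∀ i < M, IdentDistrib (D i) Y P P) :
    l2Norm P (fun ω => ∫ ω', Y ω' ∂P - sampleMean D M ω) ≤ l2Norm P Y / √M := by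
  rw [l2Norm, integral_sq_integral_sub_sampleMean hY hM hindep hident,
    Real.sqrt_div' _ (Nat.cast_nonneg M), l2Norm]
  gcongr
  simpa using variance_le_expectation_sq hY.1

lemma l2Norm_mlmc_error_le {Ψ : Ω → ℝ} {X : ℕ → Ω → ℝ} {L : ℕ} {M : ℕ → ℕ}
    {D : ℕ → ℕ → Ω → ℝ} (hΨ : MemLp Ψ 2 P) (hX : ∀ ℓ ≤ L, MemLp (X ℓ) 2 P)
    (hM : ∀ ℓ ≤ L, 1 ≤ M ℓ) (hindep : ∀ ℓ ≤ L, iIndepFun (fun i : Fin (M ℓ) => D ℓ i) P)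
    (hident : ∀ ℓ ≤ L, ∀ i < M ℓ, IdentDistrib (D ℓ i) (levelCorrection X ℓ) P P) :
    l2Norm P (fun ω => ∫ ω', Ψ ω' ∂P - ∑ ℓ ∈ Finset.range (L + 1), sampleMean (D ℓ) (M ℓ) ω) ≤
      l2Norm P (fun ω => Ψ ω - X L ω) +
        ∑ ℓ ∈ Finset.range (L + 1), l2Norm P (levelCorrection X ℓ) / √(M ℓ) := by
  have hY : ∀ ℓ ∈ Finset.range (L + 1), MemLp (levelCorrection X ℓ) 2 P := fun ℓ hℓ =>
    memLp_levelCorrection fun k hk => hX k (hk.trans (Finset.mem_range_succ_iff.mp hℓ))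
  set g : ℕ → Ω → ℝ := fun ℓ ω =>
    ∫ ω', levelCorrection X ℓ ω' ∂P - sampleMean (D ℓ) (M ℓ) ω
  have hg : ∀ ℓ ∈ Finset.range (L + 1), MemLp (g ℓ) 2 P := fun ℓ hℓ =>
    (memLp_const _).sub ((memLp_finsetSum _ fun i hi =>
      (hident ℓ (Finset.mem_range_succ_iff.mp hℓ) i (Finset.mem_range.mp hi)).symm.memLp_snd
        (hY ℓ hℓ)).const_mul _)
  have htelescope :
      ∑ ℓ ∈ Finset.range (L + 1), ∫ ω, levelCorrection X ℓ ω ∂P = ∫ ω, X L ω ∂P := by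
    rw [← integral_finsetSum _ fun ℓ hℓ => (hY ℓ hℓ).integrable one_le_two]
    simp only [sum_levelCorrection]
  have hsplit : (fun ω => ∫ ω', Ψ ω' ∂P - ∑ ℓ ∈ Finset.range (L + 1), sampleMean (D ℓ) (M ℓ) ω) =
      fun ω => (∫ ω', Ψ ω' ∂P - ∫ ω', X L ω' ∂P) + ∑ ℓ ∈ Finset.range (L + 1), g ℓ ω := by
    ext ω
    simp only [g, Finset.sum_sub_distrib, htelescope]
    ring
  have hbias : |∫ ω', Ψ ω' ∂P - ∫ ω', X L ω' ∂P| ≤ l2Norm P (fun ω => Ψ ω - X L ω) := by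
    rw [← integral_sub (hΨ.integrable one_le_two) ((hX L le_rfl).integrable one_le_two)]
    exact abs_integral_le_l2Norm (hΨ.sub (hX L le_rfl))
  rw [hsplit]
  calc _ ≤ l2Norm P (fun _ => ∫ ω', Ψ ω' ∂P - ∫ ω', X L ω' ∂P) +
        l2Norm P (fun ω => ∑ ℓ ∈ Finset.range (L + 1), g ℓ ω) :=
        l2Norm_add_le (memLp_const _) (memLp_finsetSum _ hg)
    _ ≤ _ := by
      rw [l2Norm_const]
      refine add_le_add hbias ((l2Norm_sum_le _ hg).trans (Finset.sum_le_sum fun ℓ hℓ => ?_))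
      have hℓL := Finset.mem_range_succ_iff.mp hℓ
      exact l2Norm_integral_sub_sampleMean_le (hY ℓ hℓ) (hM ℓ hℓL) (hindep ℓ hℓL) (hident ℓ hℓL)

end MLMC

open MLMC in
theorem stmt_4_general {Ω : Type*} [MeasurableSpace Ω] (P : Measure Ω) [IsProbabilityMeasure P]
    (κ : ℝ) (hκ : 1/2 < κ) (hκ1 : κ ≤ 1)
    (L : ℕ) (h : ℕ → ℝ) (hpos : 0 < h L)
    (hdec : ∀ ℓ < L, h (ℓ + 1) < h ℓ)
    (C₁ : ℝ) (hC₁ : 0 < C₁)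
    (hC₁h : ∀ ℓ, 1 ≤ ℓ → ℓ ≤ L → h (ℓ - 1) ≤ C₁ * h ℓ)
    (Ψ : Ω → ℝ) (Ψl : ℕ → Ω → ℝ)
    (hΨ : MemLp Ψ 2 P) (hΨl : ∀ ℓ ≤ L, MemLp (Ψl ℓ) 2 P)
    (C₂ : ℝ) (hC₂ : 0 < C₂)
    (happrox : ∀ ℓ ≤ L, (∫ ω, (Ψ ω - Ψl ℓ ω) ^ 2 ∂P) ^ (1/2 : ℝ) ≤ C₂ * h ℓ ^ (2 * κ))
    (ρ : ℕ → ℝ) (hρ : ∀ ℓ, 1 ≤ ℓ → ℓ ≤ L → ρ ℓ ∈ Set.Ioo (0 : ℝ) 1)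
    (Cρ : ℝ) (hρsum : ∑ ℓ ∈ Finset.Icc 1 L, ρ ℓ ≤ Cρ)
    (M : ℕ → ℕ) (hM1 : ∀ ℓ ≤ L, 1 ≤ M ℓ)
    (hM0 : h L ^ (-(4 * κ)) ≤ (M 0 : ℝ))
    (hMl : ∀ ℓ, 1 ≤ ℓ → ℓ ≤ L → (h ℓ / h L) ^ (4 * κ) * ((ρ ℓ)⁻¹) ^ 2 ≤ (M ℓ : ℝ))
    (D : ℕ → ℕ → Ω → ℝ)
    (hindep : ∀ ℓ ≤ L, iIndepFun (fun i : Fin (M ℓ) => D ℓ i) P)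
    (hident : ∀ ℓ ≤ L, ∀ i < M ℓ,
      IdentDistrib (D ℓ i) (fun ω => Ψl ℓ ω - (if ℓ = 0 then 0 else Ψl (ℓ - 1) ω)) P P) :
    (∫ ω, ((∫ ω', Ψ ω' ∂P) -
        ∑ ℓ ∈ Finset.range (L + 1), (M ℓ : ℝ)⁻¹ * ∑ i ∈ Finset.range (M ℓ), D ℓ i ω) ^ 2 ∂P)
        ^ (1/2 : ℝ) ≤
      (C₂ + (∫ ω, (Ψl 0 ω) ^ 2 ∂P) ^ (1/2 : ℝ) + C₂ * (1 + max C₁ (C₁ ^ 2)) * Cρ)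
        * h L ^ (2 * κ) := by
  simp only [← Real.sqrt_eq_rpow] at happrox ⊢
  change l2Norm P _ ≤ (C₂ + l2Norm P (Ψl 0) + _) * _
  rw [show 4 * κ = 2 * (2 * κ) by ring] at hM0 hMl
  have hh : ∀ ℓ ≤ L, h L ≤ h ℓ := fun ℓ hℓ =>
    (strictAntiOn_Iic_of_succ_lt (ψ := h) (by simpa using hdec)).antitoneOn
      (Set.mem_Iic.2 hℓ) Set.self_mem_Iic hℓ
  have hlevel : ∀ ℓ ∈ Finset.Icc 1 L, l2Norm P (levelCorrection Ψl ℓ) / √(M ℓ) ≤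
      C₂ * (1 + max C₁ (C₁ ^ 2)) * h L ^ (2 * κ) * ρ ℓ := by
    intro ℓ hℓ
    obtain ⟨hℓ1, hℓL⟩ := Finset.mem_Icc.mp hℓ
    refine Real.div_sqrt_le_mul_rpow_mul hpos (hpos.trans_le (hh ℓ hℓL)) (hρ ℓ hℓ1 hℓL).1
      (by positivity) (hMl ℓ hℓ1 hℓL) ?_
    exact l2Norm_levelCorrection_le (by omega) hΨ (fun k hk => hΨl k (hk.trans hℓL))
      (fun k hk => happrox k (hk.trans hℓL)) (fun k hk => (hpos.trans_le (hh k (hk.trans hℓL))).le)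
      (hC₁h ℓ hℓ1 hℓL) hC₁.le hC₂.le (by linarith) (by linarith)
  refine (l2Norm_mlmc_error_le hΨ hΨl hM1 hindep hident).trans ?_
  rw [Finset.sum_range_succ_eq_add_sum_Icc, levelCorrection_zero]
  calc _ ≤ C₂ * h L ^ (2 * κ) + (l2Norm P (Ψl 0) * h L ^ (2 * κ) +
        ∑ ℓ ∈ Finset.Icc 1 L, C₂ * (1 + max C₁ (C₁ ^ 2)) * h L ^ (2 * κ) * ρ ℓ) :=
        add_le_add (happrox L le_rfl) (add_le_add
          (Real.div_sqrt_le_mul_rpow hpos (l2Norm_nonneg _) hM0) (Finset.sum_le_sum hlevel))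
    _ ≤ _ := by
      have hK : 0 ≤ C₂ * (1 + max C₁ (C₁ ^ 2)) * h L ^ (2 * κ) := by positivity
      rw [← Finset.mul_sum]
      linarith [mul_le_mul_of_nonneg_left hρsum hK]

/-- **Theorem 6 of the paper.** Convergence of the multilevel Monte Carlo
estimator: under the approximation property `‖Ψ − Ψ_ℓ‖_{L²} ≤ C₂ h_ℓ^{2κ}` and the
sample-number choices `M₀ ≥ h_L^{−4κ}`, `M_ℓ ≥ (h_ℓ/h_L)^{4κ} ρ_ℓ^{−2}`, one has
`‖E(Ψ) − E^L(Ψ_L)‖_{L²} ≤ (C₂ + ‖Ψ₀‖_{L²} + C₂(1 + max(C₁, C₁²)) C_ρ) h_L^{2κ}`;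
independence of the sampled corrections across levels is not used. -/
theorem stmt_4 {Ω : Type*} [MeasurableSpace Ω] (P : Measure Ω) [IsProbabilityMeasure P]
    (κ : ℝ) (hκ : 1/2 < κ) (hκ1 : κ ≤ 1)
    (L : ℕ) (h : ℕ → ℝ) (hpos : 0 < h L)
    (hdec : ∀ ℓ < L, h (ℓ + 1) < h ℓ)
    (C₁ : ℝ) (hC₁ : 0 < C₁)
    (hC₁h : ∀ ℓ, 1 ≤ ℓ → ℓ ≤ L → h (ℓ - 1) ≤ C₁ * h ℓ)
    (Ψ : Ω → ℝ) (Ψl : ℕ → Ω → ℝ)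
    (hΨ : MemLp Ψ 2 P) (hΨl : ∀ ℓ ≤ L, MemLp (Ψl ℓ) 2 P)
    (C₂ : ℝ) (hC₂ : 0 < C₂)
    (happrox : ∀ ℓ ≤ L, (∫ ω, (Ψ ω - Ψl ℓ ω) ^ 2 ∂P) ^ (1/2 : ℝ) ≤ C₂ * h ℓ ^ (2 * κ))
    (ρ : ℕ → ℝ) (hρ : ∀ ℓ, 1 ≤ ℓ → ℓ ≤ L → ρ ℓ ∈ Set.Ioo (0 : ℝ) 1)
    (Cρ : ℝ) (hCρ : 0 < Cρ) (hρsum : ∑ ℓ ∈ Finset.Icc 1 L, ρ ℓ ≤ Cρ)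
    (M : ℕ → ℕ) (hM1 : ∀ ℓ ≤ L, 1 ≤ M ℓ)
    (hM0 : h L ^ (-(4 * κ)) ≤ (M 0 : ℝ))
    (hMl : ∀ ℓ, 1 ≤ ℓ → ℓ ≤ L → (h ℓ / h L) ^ (4 * κ) * ((ρ ℓ)⁻¹) ^ 2 ≤ (M ℓ : ℝ))
    (D : ℕ → ℕ → Ω → ℝ)
    (hindep : ∀ ℓ ≤ L, iIndepFun (fun i : Fin (M ℓ) => D ℓ i) P)
    (hident : ∀ ℓ ≤ L, ∀ i < M ℓ,
      IdentDistrib (D ℓ i) (fun ω => Ψl ℓ ω - (if ℓ = 0 then 0 else Ψl (ℓ - 1) ω)) P P) :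
    (∫ ω, ((∫ ω', Ψ ω' ∂P) -
        ∑ ℓ ∈ Finset.range (L + 1), (M ℓ : ℝ)⁻¹ * ∑ i ∈ Finset.range (M ℓ), D ℓ i ω) ^ 2 ∂P)
        ^ (1/2 : ℝ) ≤
      (C₂ + (∫ ω, (Ψl 0 ω) ^ 2 ∂P) ^ (1/2 : ℝ) + C₂ * (1 + max C₁ (C₁ ^ 2)) * Cρ)
        * h L ^ (2 * κ) :=
  stmt_4_general P κ hκ hκ1 L h hpos hdec C₁ hC₁ hC₁h Ψ Ψl hΨ hΨl C₂ hC₂ happrox ρ hρ Cρ hρsum M hM1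
    hM0 hMl D hindep hident
end

section
/- Let (Ω, 𝓐, ℙ) be a probability space, L ∈ ℕ, and Δ = (Δ_0, …, Δ_L) a random vector whose components are real random variables in L²(Ω; ℝ). Let (Δ^{(i)})_{i ∈ ℕ} be independent and identically distributed copies of the vector Δ, let M_0 ≥ M_1 ≥ ⋯ ≥ M_L ≥ 1 be integers, and define the coupled multilevel Monte Carlo estimator E_C := ∑_{ℓ=0}^{L} (1/M_ℓ) ∑_{i=1}^{M_ℓ} Δ_ℓ^{(i)}. If Cov(Δ_j, Δ_k) ≥ 0 for all 0 ≤ j < k ≤ L, then Var(E_C) ≥ ∑_{ℓ=0}^{L} Var(Δ_ℓ)/M_ℓ, i.e. the variance of the coupled estimator is at least the variance of the standard MLMC estimator built from fully independent samples with the same sample numbers. -/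
open MeasureTheory ProbabilityTheory

/-- Covariance of two real random variables: `Cov(X,Y) = E[(X − E X)(Y − E Y)]`. -/
noncomputable def cov {Ω : Type*} [MeasurableSpace Ω] (μ : Measure Ω) (X Y : Ω → ℝ) : ℝ :=
  ∫ ω, (X ω - ∫ ω', X ω' ∂μ) * (Y ω - ∫ ω', Y ω' ∂μ) ∂μ

/-!
Put `w i ℓ = 1 / M_ℓ` for `i < M_ℓ` and `w i ℓ = 0` otherwise. Then the coupled estimator is
`∑_i Y_i` with `Y_i = ∑_ℓ w i ℓ Δ_ℓ^{(i)}`, and the blocks `Y_i` are independent, so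
`Var(E_C) = ∑_i Var(∑_ℓ w i ℓ Δ_ℓ)`. Since all covariances are nonnegative, each summand is at least
its diagonal part `∑_ℓ (w i ℓ)² Var(Δ_ℓ)`, and `∑_i (w i ℓ)² = 1 / M_ℓ`.
-/

open Finset

lemma cov_eq_covariance {Ω : Type*} [MeasurableSpace Ω] (μ : Measure Ω) (X Y : Ω → ℝ) :
    cov μ X Y = cov[X, Y; μ] := rfl

section Variance

variable {Ω ι : Type*} [MeasurableSpace Ω] {μ : Measure Ω}

lemma sum_variance_le_variance_sum [IsFiniteMeasure μ] {s : Finset ι} {X : ι → Ω → ℝ}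
    (hX : ∀ i ∈ s, MemLp (X i) 2 μ) (hcov : ∀ i ∈ s, ∀ j ∈ s, i ≠ j → 0 ≤ cov[X i, X j; μ]) :
    ∑ i ∈ s, Var[X i; μ] ≤ Var[fun ω ↦ ∑ i ∈ s, X i ω; μ] := by
  rw [variance_fun_sum' hX]
  refine sum_le_sum fun i hi ↦ ?_
  rw [← covariance_self (hX i hi).aemeasurable]
  refine single_le_sum (f := fun j ↦ cov[X i, X j; μ]) (fun j hj ↦ ?_) hi
  rcases eq_or_ne i j with rfl | hij
  · rw [covariance_self (hX i hi).aemeasurable]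
    exact variance_nonneg _ _
  · exact hcov i hi j hj hij

lemma sum_sq_mul_variance_le_variance_sum_mul [IsFiniteMeasure μ] [LinearOrder ι]
    {s : Finset ι} {X : ι → Ω → ℝ} {w : ι → ℝ} (hw : ∀ i ∈ s, 0 ≤ w i)
    (hX : ∀ i ∈ s, MemLp (X i) 2 μ) (hcov : ∀ i ∈ s, ∀ j ∈ s, i < j → 0 ≤ cov[X i, X j; μ]) :
    ∑ i ∈ s, w i ^ 2 * Var[X i; μ] ≤ Var[fun ω ↦ ∑ i ∈ s, w i * X i ω; μ] := by
  simp_rw [← variance_const_mul]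
  refine sum_variance_le_variance_sum (fun i hi ↦ (hX i hi).const_mul _) fun i hi j hj hij ↦ ?_
  rw [covariance_const_mul_left, covariance_const_mul_right]
  have hcov_ij : 0 ≤ cov[X i, X j; μ] := by
    rcases hij.lt_or_gt with h | h
    · exact hcov i hi j hj h
    · rw [covariance_comm]
      exact hcov j hj i hi h
  have := hw i hi
  have := hw j hj
  positivity

variable {κ E : Type*} [MeasurableSpace E]

lemma variance_sum_comp_of_iIndepFun_of_identDistrib {V : κ → Ω → E} {W : Ω → E}
    (hindep : iIndepFun V μ) (hident : ∀ i, IdentDistrib (V i) W μ μ)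
    {f : κ → E → ℝ} (hf : ∀ i, Measurable (f i)) {t : Finset κ}
    (hfW : ∀ i ∈ t, MemLp (fun ω ↦ f i (W ω)) 2 μ) :
    Var[fun ω ↦ ∑ i ∈ t, f i (V i ω); μ] = ∑ i ∈ t, Var[fun ω ↦ f i (W ω); μ] := by
  have hident_f (i : κ) : IdentDistrib (fun ω ↦ f i (V i ω)) (fun ω ↦ f i (W ω)) μ μ :=
    (hident i).comp (hf i)
  have hmem : ∀ i ∈ t, MemLp (fun ω ↦ f i (V i ω)) 2 μ := fun i hi ↦
    (hident_f i).symm.memLp_snd (hfW i hi)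
  have hpair : Set.Pairwise ↑t fun i j ↦ IndepFun (fun ω ↦ f i (V i ω)) (fun ω ↦ f j (V j ω)) μ :=
    fun i _ j _ hij ↦ (hindep.indepFun hij).comp (hf i) (hf j)
  calc Var[fun ω ↦ ∑ i ∈ t, f i (V i ω); μ]
      = Var[∑ i ∈ t, fun ω ↦ f i (V i ω); μ] := by simp only [sum_fn]
    _ = ∑ i ∈ t, Var[fun ω ↦ f i (V i ω); μ] := IndepFun.variance_sum hmem hpair
    _ = ∑ i ∈ t, Var[fun ω ↦ f i (W ω); μ] := sum_congr rfl fun i _ ↦ (hident_f i).variance_eq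

end Variance

noncomputable def sampleWeight (M : ℕ → ℕ) (i ℓ : ℕ) : ℝ :=
  if i < M ℓ then (M ℓ : ℝ)⁻¹ else 0

lemma sampleWeight_nonneg (M : ℕ → ℕ) (i ℓ : ℕ) : 0 ≤ sampleWeight M i ℓ := by
  unfold sampleWeight
  split_ifs <;> positivity

lemma sum_range_sampleWeight_mul {M : ℕ → ℕ} {ℓ N : ℕ} (hN : M ℓ ≤ N) (b : ℕ → ℝ) :
    ∑ i ∈ range N, sampleWeight M i ℓ * b i = (M ℓ : ℝ)⁻¹ * ∑ i ∈ range (M ℓ), b i := by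
  rw [← sum_range_add_sum_Ico _ hN, mul_sum]
  have h_tail : ∑ i ∈ Ico (M ℓ) N, sampleWeight M i ℓ * b i = 0 :=
    sum_eq_zero fun i hi ↦ by simp [sampleWeight, (mem_Ico.mp hi).1]
  rw [h_tail, add_zero]
  exact sum_congr rfl fun i hi ↦ by simp [sampleWeight, mem_range.mp hi]

lemma sum_range_sampleWeight_sq {M : ℕ → ℕ} {ℓ N : ℕ} (hN : M ℓ ≤ N) :
    ∑ i ∈ range N, sampleWeight M i ℓ ^ 2 = (M ℓ : ℝ)⁻¹ := by
  simp_rw [sq, sum_range_sampleWeight_mul hN]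
  have h_mass : ∑ i ∈ range (M ℓ), sampleWeight M i ℓ = (M ℓ : ℝ)⁻¹ * M ℓ := by
    simpa using sum_range_sampleWeight_mul (M := M) le_rfl (fun _ ↦ (1 : ℝ))
  rw [h_mass]
  rcases eq_or_ne (M ℓ : ℝ) 0 with hM | hM
  · simp [hM]
  · field_simp

lemma sum_inv_mul_sum_range_eq_sum_sampleWeight {M : ℕ → ℕ} {s : Finset ℕ} {N : ℕ}
    (hN : ∀ ℓ ∈ s, M ℓ ≤ N) (a : ℕ → ℕ → ℝ) :
    ∑ ℓ ∈ s, (M ℓ : ℝ)⁻¹ * ∑ i ∈ range (M ℓ), a i ℓ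
      = ∑ i ∈ range N, ∑ ℓ ∈ s, sampleWeight M i ℓ * a i ℓ := by
  rw [sum_comm]
  exact sum_congr rfl fun ℓ hℓ ↦ (sum_range_sampleWeight_mul (hN ℓ hℓ) _).symm

theorem stmt_7_general {Ω : Type*} [MeasurableSpace Ω] (P : Measure Ω) [IsProbabilityMeasure P]
    (L : ℕ) (Δ : ℕ → Ω → ℝ) (hΔ : ∀ ℓ ≤ L, MemLp (Δ ℓ) 2 P)
    (Di : ℕ → ℕ → Ω → ℝ)
    (hindep : iIndepFun
      (fun i => fun ω (ℓ : Fin (L + 1)) => Di i ℓ ω) P)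
    (hident : ∀ i : ℕ,
      IdentDistrib (fun ω (ℓ : Fin (L + 1)) => Di i ℓ ω) (fun ω (ℓ : Fin (L + 1)) => Δ ℓ ω) P P)
    (M : ℕ → ℕ)
    (hcov : ∀ j k, j < k → k ≤ L → 0 ≤ cov P (Δ j) (Δ k)) :
    ∑ ℓ ∈ Finset.range (L + 1), variance (Δ ℓ) P / (M ℓ : ℝ) ≤
      variance (fun ω => ∑ ℓ ∈ Finset.range (L + 1),
        (M ℓ : ℝ)⁻¹ * ∑ i ∈ Finset.range (M ℓ), Di i ℓ ω) P := by
  set N := (range (L + 1)).sup M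
  have hMN : ∀ ℓ ∈ range (L + 1), M ℓ ≤ N := fun ℓ hℓ ↦ le_sup hℓ
  have hΔ' : ∀ ℓ ∈ range (L + 1), MemLp (Δ ℓ) 2 P := fun ℓ hℓ ↦ hΔ ℓ (mem_range_succ_iff.mp hℓ)
  let f : ℕ → (Fin (L + 1) → ℝ) → ℝ := fun i v ↦ ∑ ℓ : Fin (L + 1), sampleWeight M i ℓ * v ℓ
  have hf (i : ℕ) (D : ℕ → Ω → ℝ) (ω : Ω) :
      f i (fun ℓ ↦ D ℓ ω) = ∑ ℓ ∈ range (L + 1), sampleWeight M i ℓ * D ℓ ω :=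
    Fin.sum_univ_eq_sum_range (fun ℓ ↦ sampleWeight M i ℓ * D ℓ ω) _
  calc ∑ ℓ ∈ range (L + 1), Var[Δ ℓ; P] / M ℓ
      = ∑ i ∈ range N, ∑ ℓ ∈ range (L + 1), sampleWeight M i ℓ ^ 2 * Var[Δ ℓ; P] := by
        rw [sum_comm]
        refine sum_congr rfl fun ℓ hℓ ↦ ?_
        rw [← sum_mul, sum_range_sampleWeight_sq (hMN ℓ hℓ), inv_mul_eq_div]
    _ ≤ ∑ i ∈ range N, Var[fun ω ↦ ∑ ℓ ∈ range (L + 1), sampleWeight M i ℓ * Δ ℓ ω; P] := by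
        refine sum_le_sum fun i _ ↦ sum_sq_mul_variance_le_variance_sum_mul
          (fun ℓ _ ↦ sampleWeight_nonneg M i ℓ) hΔ' fun j _ k hk hjk ↦
            cov_eq_covariance P _ _ ▸ hcov j k hjk (mem_range_succ_iff.mp hk)
    _ = Var[fun ω ↦ ∑ i ∈ range N, ∑ ℓ ∈ range (L + 1), sampleWeight M i ℓ * Di i ℓ ω; P] := by
        simp_rw [← hf]
        refine (variance_sum_comp_of_iIndepFun_of_identDistrib hindep hident
          (fun i ↦ by fun_prop) fun i _ ↦ ?_).symm
        simp_rw [hf]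
        exact memLp_finsetSum _ fun ℓ hℓ ↦ (hΔ' ℓ hℓ).const_mul _
    _ = _ := by simp_rw [sum_inv_mul_sum_range_eq_sum_sampleWeight hMN]

/-- If the level corrections are pairwise nonnegatively correlated,
the coupled MLMC estimator has variance at least that of the standard MLMC estimator
with the same sample numbers: `Var(E_C) ≥ ∑_ℓ Var(Δ_ℓ)/M_ℓ`. -/
theorem stmt_7 {Ω : Type*} [MeasurableSpace Ω] (P : Measure Ω) [IsProbabilityMeasure P]
    (L : ℕ) (Δ : ℕ → Ω → ℝ) (hΔ : ∀ ℓ ≤ L, MemLp (Δ ℓ) 2 P)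
    (Di : ℕ → ℕ → Ω → ℝ)
    (hindep : iIndepFun
      (fun i => fun ω (ℓ : Fin (L + 1)) => Di i ℓ ω) P)
    (hident : ∀ i : ℕ,
      IdentDistrib (fun ω (ℓ : Fin (L + 1)) => Di i ℓ ω) (fun ω (ℓ : Fin (L + 1)) => Δ ℓ ω) P P)
    (M : ℕ → ℕ) (hM1 : 1 ≤ M L) (hMdec : ∀ j k, j ≤ k → k ≤ L → M k ≤ M j)
    (hcov : ∀ j k, j < k → k ≤ L → 0 ≤ cov P (Δ j) (Δ k)) :
    ∑ ℓ ∈ Finset.range (L + 1), variance (Δ ℓ) P / (M ℓ : ℝ) ≤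
      variance (fun ω => ∑ ℓ ∈ Finset.range (L + 1),
        (M ℓ : ℝ)⁻¹ * ∑ i ∈ Finset.range (M ℓ), Di i ℓ ω) P :=
  stmt_7_general P L Δ hΔ Di hindep hident M hcov
end
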